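/- Let (S,f) and (T,g) be pong data of type (k,m), with equivariant lifts (S̃,f̃) and (T̃,g̃), such that T = Q(f̃(S̃)). Then the composite g̃ ∘ f̃ is a lifted partial permutation on k letters and satisfies: (1) weight(g̃∘f) ≤ weight(g) + weight(f) componentwise; (2) cross(g̃∘f) ≤ cross(g) + cross(f); (3) every component of weight(g) + weight(f) − weight(g̃∘f) is a nonnegative integer (i.e. the difference lies in ℤ^m ⊂ (½ℤ)^m). -/

import Mathlib

open scoped Classical TensorProduct

noncomputable section

namespace PongPaper

/-! ## The group `G_m` acting on `ℤ`, and lifted partial permutations -/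

/-- The modulus `2m - 2`. -/
def Nm (m : ℕ) : ℤ := 2 * (m : ℤ) - 2

/-- The reflection `x ↦ 1 - x` (i.e. `r_{1/2}`). -/
def r1 (x : ℤ) : ℤ := 1 - x

/-- The reflection `x ↦ 2m - 1 - x` (i.e. `r_{m - 1/2}`). -/
def r2 (m : ℕ) (x : ℤ) : ℤ := 2 * (m : ℤ) - 1 - x

/-- The quotient map `Q : ℤ → {1, …, m-1}` for the action of
`G_m = ⟨r1, r2⟩` on `ℤ`:  `Q i` is the unique `1 ≤ t ≤ m-1` with
`t ≡ i` or `t ≡ 1 - i  (mod 2m-2)`. -/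
def Qmap (m : ℕ) (i : ℤ) : ℤ :=
  if (i - 1) % Nm m ≤ (m : ℤ) - 2 then (i - 1) % Nm m + 1 else Nm m - (i - 1) % Nm m

/-- A lifted partial permutation on `k` letters (for the group `G_m`):
a `G_m`-invariant subset `S ⊆ ℤ`, together with a `G_m`-equivariant map
`f : S → ℤ` (normalized to be the identity away from `S`), such that `S/G_m`
has `k` elements and the induced map `S/G_m → ℤ/G_m` is injective. -/
structure LPP (m k : ℕ) where
  S : Set ℤ
  f : ℤ → ℤ
  inv1 : ∀ x ∈ S, r1 x ∈ S
  inv2 : ∀ x ∈ S, r2 m x ∈ S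
  eqv1 : ∀ x ∈ S, f (r1 x) = r1 (f x)
  eqv2 : ∀ x ∈ S, f (r2 m x) = r2 m (f x)
  cardk : (Qmap m '' S).ncard = k
  injQ : ∀ x ∈ S, ∀ y ∈ S, Qmap m (f x) = Qmap m (f y) → Qmap m x = Qmap m y
  ext_id : ∀ x, x ∉ S → f x = x

/-- Pong data of type `(k, m)`: a `k`-element subset `S ⊆ {1, …, m-1}` and a map
`f : S → ℤ` (normalized to be the identity away from `S`) with `Q ∘ f` injective. -/
structure PongData (m k : ℕ) where
  S : Finset ℤ
  sub : ∀ x ∈ S, 1 ≤ x ∧ x ≤ (m : ℤ) - 1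
  cardk : S.card = k
  f : ℤ → ℤ
  injQ : ∀ x ∈ S, ∀ y ∈ S, Qmap m (f x) = Qmap m (f y) → x = y
  ext_id : ∀ x, x ∉ S → f x = x

variable {m k : ℕ}

/-- The set of lifted strands of `a` crossing the level `t - 1/2`. -/
def levelSet (a : LPP m k) (t : ℤ) : Set ℤ :=
  {x | x ∈ a.S ∧ min x (a.f x) < t ∧ t ≤ max x (a.f x)}

/-- The `i`-th component of the weight vector of `a` (the index `i : Fin m`
corresponds to the level `i + 1/2`, i.e. to the component `i+1` in the paper). -/
def weight (a : LPP m k) (i : Fin m) : ℚ := ((levelSet a ((i : ℤ) + 1)).ncard : ℚ) / 2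

/-- The equivalence on pairs of integers generated by the swap and the diagonal
`G_m`-action (the elements of `G_m` are `x ↦ x + n(2m-2)` and `x ↦ 1 + n(2m-2) - x`). -/
def GmRel (m : ℕ) (p q : ℤ × ℤ) : Prop :=
  ∃ n : ℤ,
    q = (p.1 + n * Nm m, p.2 + n * Nm m) ∨
    q = (p.2 + n * Nm m, p.1 + n * Nm m) ∨
    q = (1 + n * Nm m - p.1, 1 + n * Nm m - p.2) ∨
    q = (1 + n * Nm m - p.2, 1 + n * Nm m - p.1)

/-- Equivalence classes of (unordered, `G_m`-orbit) pairs of integers. -/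
def CrossCl (m : ℕ) := Quot (GmRel m)

/-- Lifted crossings of a lifted partial permutation. -/
def liftedCrossings (a : LPP m k) : Set (ℤ × ℤ) :=
  {p | p.1 ∈ a.S ∧ p.2 ∈ a.S ∧ (p.1 - p.2).sign ≠ (a.f p.1 - a.f p.2).sign}

/-- The set of crossings of `a`: equivalence classes of lifted crossings. -/
def crossings (a : LPP m k) : Set (CrossCl m) :=
  Quot.mk (GmRel m) '' liftedCrossings a

/-- The crossing number `cross(a)`. -/
def crossNum (a : LPP m k) : ℕ := (crossings a).ncard

/-- The underlying function of the resolution of `f` at the crossing `(i,j)`: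
it agrees with `f` away from the `G_m`-orbits of `i` and `j` and sends
`γ·i ↦ γ·f(j)` and `γ·j ↦ γ·f(i)` for all `γ ∈ G_m`. -/
def resolveFun (m : ℕ) (f : ℤ → ℤ) (i j x : ℤ) : ℤ :=
  if (x - i) % Nm m = 0 then f j + (x - i)
  else if (x + i - 1) % Nm m = 0 then x + i - f j
  else if (x - j) % Nm m = 0 then f i + (x - j)
  else if (x + j - 1) % Nm m = 0 then x + j - f i
  else f x

/-- The resolution of a lifted partial permutation at a (lifted) crossing `(i,j)`. -/
def resLPP (a : LPP m k) (i j : ℤ) : LPP m k :=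
  if h : ∃ c : LPP m k, c.S = a.S ∧ ∀ x ∈ a.S, c.f x = resolveFun m a.f i j x
  then h.choose else a

/-- The composite `g̃ ∘ f̃` of two lifted partial permutations. -/
def compLPP (f g : LPP m k) : LPP m k :=
  if h : ∃ c : LPP m k, c.S = f.S ∧ ∀ x ∈ f.S, c.f x = g.f (f.f x)
  then h.choose else f

/-!
Write `c = g̃ ∘ f̃`. Both `T̃` and `f̃(S̃)` are unions of `G_m`-orbits with the same image in
`ℤ/G_m`, so `f̃` maps `S̃` bijectively onto `T̃`. A strand `x ↦ c(x)` crosses a level exactly when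
one, but not both, of `x ↦ f̃(x)` and `f̃(x) ↦ g̃(f̃(x))` does; counting strands at each level,
`weight g + weight f - weight c` is the number of strands of `f̃` crossing the level whose
composite does not, a natural number. A crossing of `c` that is not one of `f̃` keeps its order
under `f̃`, so `f̃` carries it to a crossing of `g̃`; as `f̃` is injective and equivariant this
is injective on crossings, whence `cross c ≤ cross g + cross f`.
-/

lemma Nm_pos (hm : 2 ≤ m) : 0 < Nm m := by
  unfold Nm; omega

lemma one_add_mul_Nm_ne_two_mul (n z : ℤ) : 1 + n * Nm m ≠ 2 * z := by
  have : n * Nm m = 2 * (n * ((m : ℤ) - 1)) := by unfold Nm; ring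
  omega

lemma exists_add_mul_Nm_mem_Icc (hm : 2 ≤ m) (x : ℤ) :
    ∃ n : ℤ, x + n * Nm m ∈ Set.Icc 1 (Nm m) := by
  have hN := Nm_pos hm
  have hdiv := Int.mul_ediv_add_emod (x - 1) (Nm m)
  have h0 := Int.emod_nonneg (x - 1) hN.ne'
  have h1 := Int.emod_lt_of_pos (x - 1) hN
  set q := (x - 1) / Nm m
  have hq : x + -q * Nm m = (x - 1) % Nm m + 1 := by linear_combination -hdiv
  exact ⟨-q, by rw [hq]; constructor <;> omega⟩

lemma Qmap_add_mul (n a : ℤ) : Qmap m (a + n * Nm m) = Qmap m a := by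
  unfold Qmap
  rw [show a + n * Nm m - 1 = a - 1 + n * Nm m by ring, Int.add_mul_emod_self_right]

lemma Qmap_one_sub (hm : 2 ≤ m) (a : ℤ) : Qmap m (1 - a) = Qmap m a := by
  have hN := Nm_pos hm
  have hdiv := Int.mul_ediv_add_emod (a - 1) (Nm m)
  set r := (a - 1) % Nm m with hr
  have hr0 : 0 ≤ r := Int.emod_nonneg (a - 1) hN.ne'
  have hrN : r < Nm m := Int.emod_lt_of_pos (a - 1) hN
  have hneg : (1 - a - 1) % Nm m = Nm m - 1 - r := by
    rw [show 1 - a - 1 = Nm m - 1 - r + (-((a - 1) / Nm m) - 1) * Nm m by linear_combination hdiv,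
      Int.add_mul_emod_self_right, Int.emod_eq_of_lt (by omega) (by omega)]
  have hNm : Nm m = 2 * (m : ℤ) - 2 := rfl
  unfold Qmap
  rw [hneg, ← hr]
  split_ifs <;> omega

lemma exists_Qmap_eq (a : ℤ) :
    ∃ n : ℤ, Qmap m a = a + n * Nm m ∨ Qmap m a = 1 + n * Nm m - a := by
  have hdiv := Int.mul_ediv_add_emod (a - 1) (Nm m)
  unfold Qmap
  split_ifs
  · exact ⟨-((a - 1) / Nm m), Or.inl (by linear_combination hdiv)⟩
  · exact ⟨(a - 1) / Nm m + 1, Or.inr (by linear_combination -hdiv)⟩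

lemma Qmap_eq_iff (hm : 2 ≤ m) (a b : ℤ) :
    Qmap m a = Qmap m b ↔ ∃ n : ℤ, b = a + n * Nm m ∨ b = 1 + n * Nm m - a := by
  constructor
  · intro h
    obtain ⟨n, ha | ha⟩ := exists_Qmap_eq (m := m) a <;>
      obtain ⟨n', hb | hb⟩ := exists_Qmap_eq (m := m) b
    · exact ⟨n - n', Or.inl (by linear_combination ha - hb - h)⟩
    · exact ⟨n' - n, Or.inr (by linear_combination hb - ha + h)⟩
    · exact ⟨n - n', Or.inr (by linear_combination ha - hb - h)⟩
    · exact ⟨n' - n, Or.inl (by linear_combination hb - ha + h)⟩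
  · rintro ⟨n, rfl | rfl⟩
    · exact (Qmap_add_mul n a).symm
    · rw [show 1 + n * Nm m - a = 1 - a + n * Nm m by ring, Qmap_add_mul, Qmap_one_sub hm]

namespace LPP

variable (a : LPP m k)

lemma add_mul_mem_and_map {x : ℤ} (hx : x ∈ a.S) (n : ℤ) :
    x + n * Nm m ∈ a.S ∧ a.f (x + n * Nm m) = a.f x + n * Nm m := by
  induction n using Int.induction_on with
  | zero => simpa using hx
  | succ n ih =>
    obtain ⟨hS, hf⟩ := ih
    have hstep : x + (n + 1) * Nm m = r2 m (r1 (x + n * Nm m)) := by unfold r1 r2 Nm; ring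
    rw [hstep, a.eqv2 _ (a.inv1 _ hS), a.eqv1 _ hS, hf]
    exact ⟨a.inv2 _ (a.inv1 _ hS), by unfold r1 r2 Nm; ring⟩
  | pred n ih =>
    obtain ⟨hS, hf⟩ := ih
    have hstep : x + (-n - 1) * Nm m = r1 (r2 m (x + -n * Nm m)) := by unfold r1 r2 Nm; ring
    rw [hstep, a.eqv1 _ (a.inv2 _ hS), a.eqv2 _ hS, hf]
    exact ⟨a.inv1 _ (a.inv2 _ hS), by unfold r1 r2 Nm; ring⟩

lemma mem_add_mul_iff (n x : ℤ) : x + n * Nm m ∈ a.S ↔ x ∈ a.S :=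
  ⟨fun h => by simpa using (a.add_mul_mem_and_map h (-n)).1, fun h => (a.add_mul_mem_and_map h n).1⟩

lemma reflect_mem {x : ℤ} (hx : x ∈ a.S) (n : ℤ) : 1 + n * Nm m - x ∈ a.S := by
  rw [show 1 + n * Nm m - x = r1 x + n * Nm m by unfold r1; ring, mem_add_mul_iff]
  exact a.inv1 x hx

lemma mem_reflect_iff (n x : ℤ) : 1 + n * Nm m - x ∈ a.S ↔ x ∈ a.S :=
  ⟨fun h => by simpa using a.reflect_mem h n, fun h => a.reflect_mem h n⟩

lemma map_add_mul (n x : ℤ) : a.f (x + n * Nm m) = a.f x + n * Nm m := by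
  by_cases hx : x ∈ a.S
  · exact (a.add_mul_mem_and_map hx n).2
  · rw [a.ext_id x hx, a.ext_id _ ((a.mem_add_mul_iff n x).not.mpr hx)]

lemma map_reflect (n x : ℤ) : a.f (1 + n * Nm m - x) = 1 + n * Nm m - a.f x := by
  by_cases hx : x ∈ a.S
  · rw [show 1 + n * Nm m - x = r1 x + n * Nm m by unfold r1; ring, map_add_mul, a.eqv1 x hx]
    unfold r1; ring
  · rw [a.ext_id x hx, a.ext_id _ ((a.mem_reflect_iff n x).not.mpr hx)]

lemma mem_of_Qmap_eq (hm : 2 ≤ m) {x y : ℤ} (hx : x ∈ a.S) (h : Qmap m x = Qmap m y) :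
    y ∈ a.S := by
  obtain ⟨n, rfl | rfl⟩ := (Qmap_eq_iff hm x y).mp h
  · exact (a.mem_add_mul_iff n x).mpr hx
  · exact a.reflect_mem hx n

lemma mem_image_of_Qmap_eq (hm : 2 ≤ m) {x y : ℤ} (hx : x ∈ a.f '' a.S)
    (h : Qmap m x = Qmap m y) : y ∈ a.f '' a.S := by
  obtain ⟨z, hz, rfl⟩ := hx
  obtain ⟨n, rfl | rfl⟩ := (Qmap_eq_iff hm _ y).mp h
  · exact ⟨z + n * Nm m, (a.mem_add_mul_iff n z).mpr hz, a.map_add_mul n z⟩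
  · exact ⟨1 + n * Nm m - z, a.reflect_mem hz n, a.map_reflect n z⟩

lemma injOn (hm : 2 ≤ m) : Set.InjOn a.f a.S := by
  intro x hx y hy hxy
  obtain ⟨n, rfl | rfl⟩ := (Qmap_eq_iff hm x y).mp (a.injQ x hx y hy (congrArg (Qmap m) hxy))
  · rw [map_add_mul, left_eq_add] at hxy
    simp [(mul_eq_zero.mp hxy).resolve_right (Nm_pos hm).ne']
  · rw [map_reflect] at hxy
    exact absurd (by linear_combination -hxy) (one_add_mul_Nm_ne_two_mul n (a.f x))

lemma eq_add_mul_of_map_eq (hm : 2 ≤ m) {x y n : ℤ} (hx : x ∈ a.S) (hy : y ∈ a.S)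
    (h : a.f y = a.f x + n * Nm m) : y = x + n * Nm m :=
  a.injOn hm hy ((a.mem_add_mul_iff n x).mpr hx) (by rw [h, map_add_mul])

lemma eq_reflect_of_map_eq (hm : 2 ≤ m) {x y n : ℤ} (hx : x ∈ a.S) (hy : y ∈ a.S)
    (h : a.f y = 1 + n * Nm m - a.f x) : y = 1 + n * Nm m - x :=
  a.injOn hm hy (a.reflect_mem hx n) (by rw [h, map_reflect])

lemma image_eq_of_Qmap_image_eq (hm : 2 ≤ m) {f g : LPP m k}
    (hT : Qmap m '' g.S = Qmap m '' (f.f '' f.S)) : f.f '' f.S = g.S := by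
  ext y
  constructor
  · intro hy
    obtain ⟨z, hz, hzy⟩ := hT.symm ▸ Set.mem_image_of_mem (Qmap m) hy
    exact g.mem_of_Qmap_eq hm hz hzy
  · intro hy
    obtain ⟨z, hz, hzy⟩ := hT ▸ Set.mem_image_of_mem (Qmap m) hy
    exact f.mem_image_of_Qmap_eq hm hz hzy

lemma exists_abs_map_sub_le (hm : 2 ≤ m) : ∃ D : ℤ, ∀ x, |a.f x - x| ≤ D := by
  obtain ⟨D, hD⟩ := ((Set.finite_Icc 1 (Nm m)).image fun y => |a.f y - y|).bddAbove
  refine ⟨D, fun x => ?_⟩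
  obtain ⟨n, hn⟩ := exists_add_mul_Nm_mem_Icc hm x
  have hshift : |a.f (x + n * Nm m) - (x + n * Nm m)| = |a.f x - x| := by
    rw [a.map_add_mul]; ring_nf
  exact hshift ▸ hD ⟨_, hn, rfl⟩

end LPP

lemma mem_levelSet_iff {a : LPP m k} {t x : ℤ} :
    x ∈ levelSet a t ↔ x ∈ a.S ∧ (x < t ↔ t ≤ a.f x) := by
  simp only [levelSet, Set.mem_ofPred_eq, min_lt_iff, le_max_iff]
  constructor <;> rintro ⟨hx, h⟩ <;> exact ⟨hx, by omega⟩

lemma levelSet_finite (hm : 2 ≤ m) (a : LPP m k) (t : ℤ) : (levelSet a t).Finite := by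
  obtain ⟨D, hD⟩ := a.exists_abs_map_sub_le hm
  refine (Set.finite_Icc (t - D) (t + D)).subset fun x hx => ?_
  have := abs_le.mp (hD x)
  have := (mem_levelSet_iff.mp hx).2
  constructor <;> omega

def LPP.comp (f g : LPP m k) (hfg : Set.MapsTo f.f f.S g.S) : LPP m k where
  S := f.S
  f x := if x ∈ f.S then g.f (f.f x) else x
  inv1 := f.inv1
  inv2 := f.inv2
  eqv1 x hx := by rw [if_pos (f.inv1 x hx), if_pos hx, f.eqv1 x hx, g.eqv1 _ (hfg hx)]
  eqv2 x hx := by rw [if_pos (f.inv2 x hx), if_pos hx, f.eqv2 x hx, g.eqv2 _ (hfg hx)]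
  cardk := f.cardk
  injQ x hx y hy h := by
    rw [if_pos hx, if_pos hy] at h
    exact f.injQ x hx y hy (g.injQ _ (hfg hx) _ (hfg hy) h)
  ext_id _ hx := if_neg hx

section Composite

variable {f g : LPP m k} (hfg : Set.MapsTo f.f f.S g.S)

lemma LPP.comp_f_of_mem {x : ℤ} (hx : x ∈ f.S) : (f.comp g hfg).f x = g.f (f.f x) := if_pos hx

lemma inter_preimage_levelSet (t : ℤ) :
    f.S ∩ f.f ⁻¹' levelSet g t =
      levelSet (f.comp g hfg) t \ levelSet f t ∪ levelSet f t \ levelSet (f.comp g hfg) t := by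
  ext x
  by_cases hx : x ∈ f.S
  · simp only [Set.mem_inter_iff, Set.mem_preimage, Set.mem_union, Set.mem_sdiff,
      mem_levelSet_iff, LPP.comp_f_of_mem hfg hx, hx, hfg hx, true_and]
    rw [← not_le (a := t) (b := f.f x)]
    tauto
  · simp [hx, mem_levelSet_iff, LPP.comp]

lemma ncard_levelSet_comp (hm : 2 ≤ m) (himage : f.f '' f.S = g.S) (t : ℤ) :
    (levelSet g t).ncard + (levelSet f t).ncard =
      (levelSet (f.comp g hfg) t).ncard + 2 * (levelSet f t \ levelSet (f.comp g hfg) t).ncard := by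
  set A := levelSet (f.comp g hfg) t
  set B := levelSet f t
  have hA : A.Finite := levelSet_finite hm (f.comp g hfg) t
  have hB : B.Finite := levelSet_finite hm f t
  have hg : (levelSet g t).ncard = (A \ B ∪ B \ A).ncard := by
    rw [← inter_preimage_levelSet hfg, ((f.injOn hm).mono Set.inter_subset_left).ncard_image.symm,
      Set.image_inter_preimage, himage, Set.inter_eq_right.mpr fun _ hx => hx.1]
  rw [hg, Set.ncard_union_eq disjoint_sdiff_sdiff hA.sdiff hB.sdiff]
  have := Set.ncard_inter_add_ncard_sdiff_eq_ncard A B hA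
  have := Set.ncard_inter_add_ncard_sdiff_eq_ncard B A hB
  rw [Set.inter_comm] at this
  omega

lemma weight_add_weight_eq (hm : 2 ≤ m) (himage : f.f '' f.S = g.S) (i : Fin m) :
    weight g i + weight f i = weight (f.comp g hfg) i +
      (levelSet f ((i : ℤ) + 1) \ levelSet (f.comp g hfg) ((i : ℤ) + 1)).ncard := by
  have := congrArg (Nat.cast : ℕ → ℚ) (ncard_levelSet_comp hfg hm himage ((i : ℤ) + 1))
  push_cast at this
  unfold weight
  linarith

end Composite

lemma gmRel_equivalence (m : ℕ) : Equivalence (GmRel m) where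
  refl p := ⟨0, Or.inl (by simp)⟩
  symm := by
    rintro ⟨p₁, p₂⟩ _ ⟨n, rfl | rfl | rfl | rfl⟩ <;>
      first
      | (refine ⟨-n, ?_⟩; simp only [Prod.mk.injEq, neg_mul]; omega)
      | (refine ⟨n, ?_⟩; simp only [Prod.mk.injEq]; omega)
  trans := by
    rintro p q r ⟨n, rfl | rfl | rfl | rfl⟩ ⟨n', rfl | rfl | rfl | rfl⟩ <;>
      first
      | (refine ⟨n + n', ?_⟩; simp only [Prod.mk.injEq, add_mul]; omega)
      | (refine ⟨n' - n, ?_⟩; simp only [Prod.mk.injEq, sub_mul]; omega)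

lemma abs_sub_le_of_mem_liftedCrossings {a : LPP m k} {D : ℤ} (hD : ∀ x, |a.f x - x| ≤ D)
    {p : ℤ × ℤ} (hp : p ∈ liftedCrossings a) : |p.1 - p.2| ≤ 2 * D := by
  by_contra! h
  apply hp.2.2
  have := abs_le.mp (hD p.1)
  have := abs_le.mp (hD p.2)
  rcases lt_abs.mp h with h | h
  · rw [Int.sign_eq_one_of_pos (by omega), Int.sign_eq_one_of_pos (by omega)]
  · rw [Int.sign_eq_neg_one_of_neg (by omega), Int.sign_eq_neg_one_of_neg (by omega)]

/-- Every crossing has a lift `(i, j)` with `1 ≤ i ≤ 2m - 2`, and then `j` is close to `i`. -/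
lemma crossings_finite (hm : 2 ≤ m) (a : LPP m k) : (crossings a).Finite := by
  obtain ⟨D, hD⟩ := a.exists_abs_map_sub_le hm
  refine (((Set.finite_Icc 1 (Nm m)).prod (Set.finite_Icc (1 - 2 * D) (Nm m + 2 * D))).image
    (Quot.mk (GmRel m))).subset ?_
  rintro _ ⟨⟨i, j⟩, hij, rfl⟩
  obtain ⟨n, hn⟩ := exists_add_mul_Nm_mem_Icc hm i
  have := abs_le.mp (abs_sub_le_of_mem_liftedCrossings hD hij)
  refine ⟨(i + n * Nm m, j + n * Nm m), ⟨hn, ?_⟩, (Quot.sound ⟨n, Or.inl rfl⟩).symm⟩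
  simp only [Set.mem_Icc] at hn ⊢
  omega

namespace LPP

variable (a : LPP m k)

lemma gmRel_map {p q : ℤ × ℤ} (h : GmRel m p q) :
    GmRel m (a.f p.1, a.f p.2) (a.f q.1, a.f q.2) := by
  obtain ⟨n, rfl | rfl | rfl | rfl⟩ := h <;> refine ⟨n, ?_⟩ <;>
    simp only [map_add_mul, map_reflect, true_or, or_true]

lemma gmRel_of_gmRel_map (hm : 2 ≤ m) {p q : ℤ × ℤ} (hp : p ∈ a.S ×ˢ a.S) (hq : q ∈ a.S ×ˢ a.S)
    (h : GmRel m (a.f p.1, a.f p.2) (a.f q.1, a.f q.2)) : GmRel m p q := by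
  obtain ⟨hp1, hp2⟩ := hp
  obtain ⟨hq1, hq2⟩ := hq
  obtain ⟨n, h | h | h | h⟩ := h <;> simp only [Prod.mk.injEq] at h <;> refine ⟨n, ?_⟩
  · exact Or.inl (Prod.ext (a.eq_add_mul_of_map_eq hm hp1 hq1 h.1)
      (a.eq_add_mul_of_map_eq hm hp2 hq2 h.2))
  · exact Or.inr (Or.inl (Prod.ext (a.eq_add_mul_of_map_eq hm hp2 hq1 h.1)
      (a.eq_add_mul_of_map_eq hm hp1 hq2 h.2)))
  · exact Or.inr (Or.inr (Or.inl (Prod.ext (a.eq_reflect_of_map_eq hm hp1 hq1 h.1)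
      (a.eq_reflect_of_map_eq hm hp2 hq2 h.2))))
  · exact Or.inr (Or.inr (Or.inr (Prod.ext (a.eq_reflect_of_map_eq hm hp2 hq1 h.1)
      (a.eq_reflect_of_map_eq hm hp1 hq2 h.2))))

def crossMap : CrossCl m → CrossCl m :=
  Quot.lift (fun p => Quot.mk (GmRel m) (a.f p.1, a.f p.2)) fun _ _ h => Quot.sound (a.gmRel_map h)

lemma crossMap_injOn (hm : 2 ≤ m) : Set.InjOn a.crossMap (Quot.mk (GmRel m) '' a.S ×ˢ a.S) := by
  rintro _ ⟨p, hp, rfl⟩ _ ⟨q, hq, rfl⟩ h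
  exact Quot.sound (a.gmRel_of_gmRel_map hm hp hq
    ((gmRel_equivalence m).eqvGen_iff.mp (Quot.eqvGen_exact h)))

end LPP

lemma crossNum_comp_le (hm : 2 ≤ m) {f g : LPP m k} (hfg : Set.MapsTo f.f f.S g.S) :
    crossNum (f.comp g hfg) ≤ crossNum g + crossNum f := by
  have hmaps : ∀ κ ∈ crossings (f.comp g hfg) \ crossings f, f.crossMap κ ∈ crossings g := by
    rintro _ ⟨⟨p, ⟨hp1, hp2, hsign⟩, rfl⟩, hnot⟩
    have hsign_f : (p.1 - p.2).sign = (f.f p.1 - f.f p.2).sign :=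
      not_not.mp fun h => hnot ⟨p, ⟨hp1, hp2, h⟩, rfl⟩
    refine ⟨(f.f p.1, f.f p.2), ⟨hfg hp1, hfg hp2, ?_⟩, rfl⟩
    rwa [LPP.comp_f_of_mem hfg hp1, LPP.comp_f_of_mem hfg hp2, hsign_f] at hsign
  have hinj : Set.InjOn f.crossMap (crossings (f.comp g hfg) \ crossings f) := by
    refine (f.crossMap_injOn hm).mono ?_
    rintro _ ⟨⟨p, ⟨hp1, hp2, -⟩, rfl⟩, -⟩
    exact ⟨p, ⟨hp1, hp2⟩, rfl⟩
  calc crossNum (f.comp g hfg)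
      ≤ (crossings (f.comp g hfg) \ crossings f).ncard + crossNum f :=
        Set.ncard_le_ncard_sdiff_add_ncard _ _ (crossings_finite hm f)
    _ ≤ crossNum g + crossNum f := by
        gcongr
        exact Set.ncard_le_ncard_of_injOn _ hmaps hinj (crossings_finite hm g)

/-- If `(S,f)` and `(T,g)` are (lifts of) pong data with
`T = Q(f̃(S̃))`, then the composite `g̃ ∘ f̃` is a lifted partial permutation `c`
and satisfies `weight(c) ≤ weight(g) + weight(f)` componentwise,
`cross(c) ≤ cross(g) + cross(f)`, and
`weight(g) + weight(f) - weight(c) ∈ ℤ^m ⊆ (½ℤ)^m` (componentwise a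
nonnegative integer). -/
theorem statement_1 (m k : ℕ) (hm : 2 ≤ m) (f g : LPP m k)
    (hT : Qmap m '' g.S = Qmap m '' (f.f '' f.S)) :
    ∃ c : LPP m k, c.S = f.S ∧ (∀ x ∈ f.S, c.f x = g.f (f.f x)) ∧
      (∀ i : Fin m, weight c i ≤ weight g i + weight f i) ∧
      crossNum c ≤ crossNum g + crossNum f ∧
      (∀ i : Fin m, ∃ n : ℕ, weight g i + weight f i - weight c i = (n : ℚ)) := by
  have himage : f.f '' f.S = g.S := LPP.image_eq_of_Qmap_image_eq hm hT
  have hfg : Set.MapsTo f.f f.S g.S := himage ▸ Set.mapsTo_image f.f f.S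
  refine ⟨f.comp g hfg, rfl, fun x hx => LPP.comp_f_of_mem hfg hx, fun i => ?_,
    crossNum_comp_le hm hfg, fun i => ?_⟩
  · rw [weight_add_weight_eq hfg hm himage i]
    exact le_add_of_nonneg_right (Nat.cast_nonneg _)
  · exact ⟨_, by rw [weight_add_weight_eq hfg hm himage i, add_sub_cancel_left]⟩

end PongPaper
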